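/- For every nonnegative integer m, the number of self-conjugate (2t_1, ..., 2t_p)-core partitions of n with disparity m(m+1)/2 equals the number of (t_1, ..., t_p)-core partitions of k if n = 4k + m(m+1)/2, and 0 otherwise. -/

import Mathlib

/-- A partition, encoded as an antitone, eventually-zero function (0-indexed parts). -/
def IsPartition (l : ℕ → ℕ) : Prop := Antitone l ∧ ∃ N, l N = 0

/-- The conjugate partition: `conj l j` is the number of rows whose length exceeds `j`. -/
noncomputable def conj (l : ℕ → ℕ) (j : ℕ) : ℕ := Set.ncard {i | j < l i}

/-- Hook length of the box in row `i`, column `j` (0-indexed): arm + leg + 1. -/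
noncomputable def hookLen (l : ℕ → ℕ) (i j : ℕ) : ℕ :=
  (l i - (j + 1)) + (conj l j - (i + 1)) + 1

/-- A self-conjugate partition equals its conjugate. -/
def SelfConj (l : ℕ → ℕ) : Prop := conj l = l

/-- Side length of the Durfee square: the number of boxes on the main diagonal. -/
noncomputable def durfee (l : ℕ → ℕ) : ℕ := Set.ncard {i | i < l i}

/-- The number of boxes of the Young diagram. -/
noncomputable def psize (l : ℕ → ℕ) : ℕ := Set.ncard {p : ℕ × ℕ | p.2 < l p.1}

/-- The disparity: (#boxes with odd hook length) - (#boxes with even hook length). -/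
noncomputable def dp (l : ℕ → ℕ) : ℤ :=
  (Set.ncard {p : ℕ × ℕ | p.2 < l p.1 ∧ Odd (hookLen l p.1 p.2)} : ℤ) -
  (Set.ncard {p : ℕ × ℕ | p.2 < l p.1 ∧ Even (hookLen l p.1 p.2)} : ℤ)

/-- The set of main diagonal hook lengths. -/
def Dset (l : ℕ → ℕ) : Set ℕ := {x | ∃ i, i < l i ∧ x = hookLen l i i}

/-- Main diagonal hook lengths congruent to 1 mod 4. -/
def D1 (l : ℕ → ℕ) : Set ℕ := {x ∈ Dset l | x % 4 = 1}

/-- Main diagonal hook lengths congruent to 3 mod 4. -/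
def D3 (l : ℕ → ℕ) : Set ℕ := {x ∈ Dset l | x % 4 = 3}

/-- A `t`-core partition: no hook length is divisible by `t`. -/
def IsCore (l : ℕ → ℕ) (t : ℕ) : Prop := ∀ i j, j < l i → ¬ (t ∣ hookLen l i j)

/-!
A partition `λ` is encoded by its beta numbers `X = {λᵢ - 1 - i}`, a Maya diagram of charge
zero. Boxes correspond to pairs `b ∈ X`, `c ∉ X`, `c < b`, with hook length `b - c`; so `λ` is
a `t`-core iff `X - t ⊆ X`, and conjugation acts as `x ↦ -1 - x` on the complement, which makes
the self-conjugate partitions those with `x ∈ X ↔ -1 - x ∉ X`. Such an `X` is determined by its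
even half `Y = {y | 2y ∈ X}`, an arbitrary Maya diagram, of charge `c` say. The even hooks of
`X` are two copies of the hooks of `Y`; the odd ones correspond to the pairs of elements of `Y`
with sum `≥ 0` and the pairs of gaps of `Y` with sum `< 0`. Moving an element `x` of `Y` down
to a gap `x - 1` removes one hook of `Y` and two such pairs, and `Y = Iio c` has `c (2c - 1)`
of them. Hence `|λ| = 4 |μ| + c (2c - 1)` and the disparity of `λ` is `c (2c - 1)`, where `μ`
is the partition with Maya diagram `Y`; `2t`-cores `λ` correspond to `t`-cores `μ`, and
`c ↦ c (2c - 1)` is a bijection from `ℤ` onto the triangular numbers.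
-/

open Set

lemma IsLowerSet.eq_Iio_ncard {s : Set ℕ} (hs : IsLowerSet s) (hfin : s.Finite) :
    s = Iio s.ncard := by
  obtain h | ⟨a, rfl⟩ := hs.eq_univ_or_Iio
  · exact absurd (h ▸ hfin) infinite_univ
  · rw [ncard_Iio_nat]

open Classical in
lemma ncard_inter_Ici_eq {α : Type*} [LinearOrder α] (S : Set α) (a : α)
    (hfin : (S ∩ Ioi a).Finite) :
    (S ∩ Ici a).ncard = (S ∩ Ioi a).ncard + if a ∈ S then 1 else 0 := by
  rw [← Ioi_insert]
  split_ifs with ha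
  · rw [inter_insert_of_mem ha, ncard_insert_of_notMem (fun h => lt_irrefl a h.2) hfin]
  · rw [inter_insert_of_notMem ha, add_zero]

open Classical in
lemma ncard_inter_Iic_eq {α : Type*} [LinearOrder α] (S : Set α) (a : α)
    (hfin : (S ∩ Iio a).Finite) :
    (S ∩ Iic a).ncard = (S ∩ Iio a).ncard + if a ∈ S then 1 else 0 := by
  rw [← Iio_insert]
  split_ifs with ha
  · rw [inter_insert_of_mem ha, ncard_insert_of_notMem (fun h => lt_irrefl a h.2) hfin]
  · rw [inter_insert_of_notMem ha, add_zero]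

open Classical in
lemma ncard_insert_inter {α : Type*} {T S : Set α} {x : α} (hx : x ∉ T)
    (hfin : (T ∩ S).Finite) :
    (insert x T ∩ S).ncard = (T ∩ S).ncard + if x ∈ S then 1 else 0 := by
  split_ifs with h
  · rw [insert_inter_of_mem h, ncard_insert_of_notMem (fun h' => hx h'.1) hfin]
  · rw [insert_inter_of_notMem h, add_zero]

lemma ncard_preimage_of_bijective {α β : Type*} {f : α → β} (hf : f.Bijective) (t : Set β) :
    (f ⁻¹' t).ncard = t.ncard :=
  ncard_preimage_of_injective_subset_range hf.injective (by simp [hf.surjective.range_eq])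

lemma Int.ncard_Ico (a b : ℤ) : (Ico a b).ncard = (b - a).toNat := by
  rw [← Finset.coe_Ico, ncard_coe_finset, Int.card_Ico]

section Partition

variable {l : ℕ → ℕ}

lemma IsPartition.exists_forall_ge_eq_zero (hl : IsPartition l) : ∃ N, ∀ i ≥ N, l i = 0 := by
  obtain ⟨N, hN⟩ := hl.2
  exact ⟨N, fun i hi => Nat.eq_zero_of_le_zero (hN ▸ hl.1 hi)⟩

lemma setOf_lt_eq_Iio_conj (hl : IsPartition l) (j : ℕ) : {i | j < l i} = Iio (conj l j) := by
  obtain ⟨N, hN⟩ := hl.exists_forall_ge_eq_zero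
  refine IsLowerSet.eq_Iio_ncard (fun a b hba ha => lt_of_lt_of_le ha (hl.1 hba))
    ((finite_Iio N).subset fun i hi => ?_)
  by_contra h
  simp [hN i (not_lt.1 h)] at hi

lemma lt_conj_iff (hl : IsPartition l) {i j : ℕ} : i < conj l j ↔ j < l i := by
  rw [← mem_Iio, ← setOf_lt_eq_Iio_conj hl j]
  rfl

lemma antitone_conj (hl : IsPartition l) : Antitone (conj l) := by
  intro j j' hjj'
  by_contra! h
  exact lt_irrefl _ ((lt_conj_iff hl).2 (hjj'.trans_lt ((lt_conj_iff hl).1 h)))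

lemma isPartition_conj (hl : IsPartition l) : IsPartition (conj l) :=
  ⟨antitone_conj hl, l 0, Nat.eq_zero_of_not_pos fun h => lt_irrefl _ ((lt_conj_iff hl).1 h)⟩

end Partition

namespace Maya

def IsDiagram (X : Set ℤ) : Prop := (∃ N, Iio N ⊆ X) ∧ BddAbove X

noncomputable def charge (X : Set ℤ) : ℤ := (X ∩ Ici 0).ncard - (Xᶜ ∩ Iio 0).ncard

def hookPairs (X : Set ℤ) : Set (ℤ × ℤ) := {q | q.1 ∈ X ∧ q.2 ∉ X ∧ q.2 < q.1}

variable {X Y : Set ℤ}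

lemma IsDiagram.finite_inter_Ici (hX : IsDiagram X) (a : ℤ) : (X ∩ Ici a).Finite :=
  (bddBelow_Ici.mono inter_subset_right).finite_of_bddAbove (hX.2.mono inter_subset_left)

lemma IsDiagram.finite_inter_Ioi (hX : IsDiagram X) (a : ℤ) : (X ∩ Ioi a).Finite :=
  (hX.finite_inter_Ici a).subset (inter_subset_inter_right _ Ioi_subset_Ici_self)

lemma IsDiagram.finite_compl_inter_Iic (hX : IsDiagram X) (a : ℤ) : (Xᶜ ∩ Iic a).Finite := by
  obtain ⟨N, hN⟩ := hX.1
  refine BddBelow.finite_of_bddAbove ⟨N, fun x hx => ?_⟩ (bddAbove_Iic.mono inter_subset_right)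
  by_contra h
  exact hx.1 (hN (not_le.1 h))

lemma IsDiagram.finite_compl_inter_Iio (hX : IsDiagram X) (a : ℤ) : (Xᶜ ∩ Iio a).Finite :=
  (hX.finite_compl_inter_Iic a).subset (inter_subset_inter_right _ Iio_subset_Iic_self)

lemma IsDiagram.finite_hookPairs (hX : IsDiagram X) : (hookPairs X).Finite := by
  obtain ⟨⟨N, hN⟩, M, hM⟩ := hX
  refine ((finite_Icc N M).prod (finite_Icc N M)).subset fun q ⟨hb, hc, hcb⟩ => ?_
  have hNc : N ≤ q.2 := not_lt.1 fun h => hc (hN h)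
  have hbM : q.1 ≤ M := hM hb
  exact ⟨⟨by omega, hbM⟩, hNc, by omega⟩

lemma IsDiagram.charge_eq_ncard_sub_ncard_add (hX : IsDiagram X) (a : ℤ) :
    charge X = (X ∩ Ici a).ncard - (Xᶜ ∩ Iio a).ncard + a := by
  classical
  have step : ∀ a : ℤ, ((X ∩ Ici a).ncard : ℤ) - (Xᶜ ∩ Iio a).ncard + a
      = (X ∩ Ici (a + 1)).ncard - (Xᶜ ∩ Iio (a + 1)).ncard + (a + 1) := fun a => by
    rw [Ici_add_one_eq_Ioi, Iio_add_one_eq_Iic, ncard_inter_Ici_eq X a (hX.finite_inter_Ioi a),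
      ncard_inter_Iic_eq Xᶜ a (hX.finite_compl_inter_Iio a)]
    by_cases ha : a ∈ X <;> simp [ha] <;> ring
  induction a using Int.induction_on with
  | zero => simp [charge]
  | succ i ih => rw [← step, ← ih]
  | pred i ih => rw [step, sub_add_cancel, ← ih]

lemma IsDiagram.charge_eq_of_Iio_subset (hX : IsDiagram X) {N : ℤ} (hN : Iio N ⊆ X) :
    charge X = (X ∩ Ici N).ncard + N := by
  have hempty : Xᶜ ∩ Iio N = ∅ := eq_empty_of_forall_notMem fun x hx => hx.1 (hN hx.2)
  rw [hX.charge_eq_ncard_sub_ncard_add N, hempty, ncard_empty]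
  simp

lemma IsDiagram.nonempty (hX : IsDiagram X) : X.Nonempty :=
  let ⟨N, hN⟩ := hX.1
  ⟨N - 1, hN (sub_one_lt N)⟩

lemma IsDiagram.exists_ncard_inter_Ioi_eq (hX : IsDiagram X) (i : ℕ) :
    ∃ x ∈ X, (X ∩ Ioi x).ncard = i := by
  induction i with
  | zero =>
    refine ⟨sSup X, Int.csSup_mem hX.nonempty hX.2, ?_⟩
    rw [ncard_eq_zero (hX.finite_inter_Ioi _)]
    exact eq_empty_of_forall_notMem fun y hy => not_le.2 hy.2 (le_csSup hX.2 hy.1)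
  | succ i ih =>
    obtain ⟨x, hx, hi⟩ := ih
    obtain ⟨N, hN⟩ := hX.1
    have hne : (X ∩ Iio x).Nonempty := ⟨min N x - 1, hN (by simp), by simp⟩
    have hbdd : BddAbove (X ∩ Iio x) := ⟨x, fun y hy => le_of_lt hy.2⟩
    have hg : sSup (X ∩ Iio x) ∈ X ∩ Iio x := Int.csSup_mem hne hbdd
    refine ⟨_, hg.1, ?_⟩
    have hsucc : X ∩ Ioi (sSup (X ∩ Iio x)) = insert x (X ∩ Ioi x) := by
      ext y
      simp only [mem_inter_iff, mem_Ioi, mem_insert_iff]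
      constructor
      · rintro ⟨hy, hgy⟩
        rcases lt_trichotomy y x with h | rfl | h
        · exact absurd (le_csSup hbdd ⟨hy, h⟩) (not_le.2 hgy)
        · exact Or.inl rfl
        · exact Or.inr ⟨hy, h⟩
      · rintro (rfl | ⟨hy, h⟩)
        · exact ⟨hx, hg.2⟩
        · exact ⟨hy, hg.2.trans h⟩
    rw [hsucc, ncard_insert_of_notMem (fun h => lt_irrefl x h.2) (hX.finite_inter_Ioi x), hi]

/-- The `i`-th part counts the gaps below the element of `X` with exactly `i` elements above it;
the charge of `X` is forgotten. -/
noncomputable def toPartition (X : Set ℤ) (i : ℕ) : ℕ :=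
  (Xᶜ ∩ {c | i < (X ∩ Ioi c).ncard}).ncard

lemma IsDiagram.toPartition_ncard_inter_Ioi (hX : IsDiagram X) {x : ℤ} (hx : x ∈ X) :
    (toPartition X (X ∩ Ioi x).ncard : ℤ) = x + 1 + (X ∩ Ioi x).ncard - charge X := by
  have hgaps : Xᶜ ∩ {c | (X ∩ Ioi x).ncard < (X ∩ Ioi c).ncard} = Xᶜ ∩ Iio x := by
    ext c
    simp only [mem_inter_iff, mem_ofPred_eq, mem_Iio, and_congr_right_iff]
    intro _
    constructor
    · intro h
      by_contra! hxc
      exact not_le.2 h (ncard_le_ncard (inter_subset_inter_right _ (Ioi_subset_Ioi hxc))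
        (hX.finite_inter_Ioi x))
    · intro hcx
      have hsub : insert x (X ∩ Ioi x) ⊆ X ∩ Ioi c :=
        insert_subset ⟨hx, hcx⟩ (inter_subset_inter_right _ (Ioi_subset_Ioi hcx.le))
      have := ncard_le_ncard hsub (hX.finite_inter_Ioi c)
      rwa [ncard_insert_of_notMem (fun h => lt_irrefl x h.2) (hX.finite_inter_Ioi x)] at this
  have hcharge := hX.charge_eq_ncard_sub_ncard_add x
  rw [ncard_inter_Ici_eq X x (hX.finite_inter_Ioi x), if_pos hx] at hcharge
  rw [toPartition, hgaps]
  push_cast at hcharge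
  linarith

lemma IsDiagram.isPartition_toPartition (hX : IsDiagram X) : IsPartition (toPartition X) := by
  obtain ⟨N, hN⟩ := hX.1
  obtain ⟨M, hM⟩ := hX.2
  refine ⟨fun i i' hii' => ncard_le_ncard (fun c hc => ⟨hc.1, hii'.trans_lt hc.2⟩) ?_,
    (X ∩ Ici N).ncard, ?_⟩
  · refine (hX.finite_compl_inter_Iic M).subset fun c ⟨hc, hci⟩ => ⟨hc, ?_⟩
    obtain ⟨y, hy, hcy⟩ := nonempty_of_ncard_ne_zero (Nat.ne_zero_of_lt hci)
    exact (mem_Ioi.1 hcy).le.trans (hM hy)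
  · have hempty : Xᶜ ∩ {c | (X ∩ Ici N).ncard < (X ∩ Ioi c).ncard} = ∅ :=
      eq_empty_of_forall_notMem fun c ⟨hc, hci⟩ => by
        have hNc : N ≤ c := not_lt.1 fun h => hc (hN h)
        exact not_le.2 hci (ncard_le_ncard (inter_subset_inter_right _ fun y hy => hNc.trans
          (le_of_lt hy)) (hX.finite_inter_Ici N))
    simp only [toPartition, hempty, ncard_empty]

def shift (X : Set ℤ) (d : ℤ) : Set ℤ := (· - d) ⁻¹' X

@[simp] lemma mem_shift {d z : ℤ} : z ∈ shift X d ↔ z - d ∈ X := Iff.rfl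

lemma shift_zero (X : Set ℤ) : shift X 0 = X := by
  ext z
  simp

lemma shift_shift (X : Set ℤ) (d e : ℤ) : shift (shift X d) e = shift X (d + e) := by
  ext z
  simp [sub_sub, add_comm]

lemma isDiagram_shift (hX : IsDiagram X) (d : ℤ) : IsDiagram (shift X d) := by
  obtain ⟨⟨N, hN⟩, M, hM⟩ := hX
  exact ⟨⟨N + d, fun z hz => hN (by simp at hz ⊢; omega)⟩,
    ⟨M + d, fun z hz => by have := hM (mem_shift.1 hz); omega⟩⟩

lemma ncard_shift_inter (S T : Set ℤ) (d : ℤ) :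
    (shift S d ∩ shift T d).ncard = (S ∩ T).ncard :=
  ncard_preimage_of_bijective (Equiv.subRight d).bijective (S ∩ T)

lemma IsDiagram.charge_shift (hX : IsDiagram X) (d : ℤ) : charge (shift X d) = charge X + d := by
  have hIci : Ici d = shift (Ici 0) d := by ext z; simp
  have hIio : Iio d = shift (Iio 0) d := by ext z; simp
  have hcompl : (shift X d)ᶜ = shift Xᶜ d := rfl
  rw [(isDiagram_shift hX d).charge_eq_ncard_sub_ncard_add d, hIci, hIio, hcompl,
    ncard_shift_inter, ncard_shift_inter, charge]

lemma ncard_hookPairs_shift (X : Set ℤ) (d : ℤ) :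
    (hookPairs (shift X d)).ncard = (hookPairs X).ncard := by
  have h : hookPairs (shift X d) = Prod.map (· - d) (· - d) ⁻¹' hookPairs X := by
    ext q
    simp [hookPairs]
  rw [h, ncard_preimage_of_bijective (f := Prod.map (· - d) (· - d))
    ((Equiv.subRight d).bijective.prodMap (Equiv.subRight d).bijective)]

lemma sub_mem_shift_iff {d t : ℤ} :
    (∀ x ∈ shift X d, x - t ∈ shift X d) ↔ ∀ x ∈ X, x - t ∈ X := by
  refine ⟨fun h x hx => ?_, fun h x hx => ?_⟩
  · simpa [sub_right_comm] using h (x + d) (by simpa using hx)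
  · simpa [sub_right_comm] using h _ hx

/-! ### Beta numbers -/

def betaSet (l : ℕ → ℕ) : Set ℤ := range fun i : ℕ => (l i : ℤ) - 1 - i

noncomputable def boxToHookPair (l : ℕ → ℕ) (p : ℕ × ℕ) : ℤ × ℤ :=
  ((l p.1 : ℤ) - 1 - p.1, (p.2 : ℤ) - conj l p.2)

def IsSelfDual (X : Set ℤ) : Prop := ∀ x, x ∈ X ↔ -1 - x ∉ X

section BetaSet

variable {l : ℕ → ℕ}

lemma strictAnti_beta (hl : IsPartition l) : StrictAnti fun i : ℕ => (l i : ℤ) - 1 - i :=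
  strictAnti_nat_of_succ_lt fun i => by
    have : l (i + 1) ≤ l i := hl.1 (Nat.le_succ i)
    push_cast
    omega

lemma strictMono_sub_conj (hl : IsPartition l) : StrictMono fun j : ℕ => (j : ℤ) - conj l j :=
  strictMono_nat_of_lt_succ fun j => by
    have : conj l (j + 1) ≤ conj l j := antitone_conj hl (Nat.le_succ j)
    push_cast
    omega

lemma Iio_subset_betaSet {N : ℕ} (hN : ∀ i ≥ N, l i = 0) :
    Iio (-(N : ℤ)) ⊆ betaSet l := by
  intro x hx
  rw [mem_Iio] at hx
  have hi : N ≤ (-1 - x).toNat := by omega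
  refine ⟨(-1 - x).toNat, ?_⟩
  show (l (-1 - x).toNat : ℤ) - 1 - ((-1 - x).toNat : ℕ) = x
  rw [hN _ hi]
  omega

lemma isDiagram_betaSet (hl : IsPartition l) : IsDiagram (betaSet l) := by
  obtain ⟨N, hN⟩ := hl.exists_forall_ge_eq_zero
  refine ⟨⟨_, Iio_subset_betaSet hN⟩, l 0, ?_⟩
  rintro _ ⟨i, rfl⟩
  have : l i ≤ l 0 := hl.1 (Nat.zero_le i)
  simp only
  omega

lemma charge_betaSet (hl : IsPartition l) : charge (betaSet l) = 0 := by
  obtain ⟨N, hN⟩ := hl.exists_forall_ge_eq_zero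
  have himage : betaSet l ∩ Ici (-(N : ℤ)) = (fun i : ℕ => (l i : ℤ) - 1 - i) '' Iio N := by
    ext x
    simp only [betaSet, mem_inter_iff, mem_range, mem_Ici, mem_image, mem_Iio]
    constructor
    · rintro ⟨⟨i, rfl⟩, hi⟩
      refine ⟨i, ?_, rfl⟩
      by_contra! h
      rw [hN i h] at hi
      omega
    · rintro ⟨i, hi, rfl⟩
      exact ⟨⟨i, rfl⟩, by omega⟩
  rw [(isDiagram_betaSet hl).charge_eq_of_Iio_subset (Iio_subset_betaSet hN), himage,
    (strictAnti_beta hl).injective.injOn.ncard_image, ncard_Iio_nat]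
  ring

lemma sub_conj_notMem_betaSet (hl : IsPartition l) (j : ℕ) : (j : ℤ) - conj l j ∉ betaSet l := by
  rintro ⟨i, hi⟩
  simp only at hi
  rcases lt_or_ge i (conj l j) with h | h
  · have := (lt_conj_iff hl).1 h
    omega
  · have := mt (lt_conj_iff hl).2 (not_lt.2 h)
    omega

lemma exists_sub_conj_eq (hl : IsPartition l) {x : ℤ} (hx : x ∉ betaSet l) :
    ∃ j : ℕ, (j : ℤ) - conj l j = x := by
  -- `A` rows have beta number above `x`; then `x` is the gap in column `x + A`.
  set S := {i : ℕ | x < (l i : ℤ) - 1 - i}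
  have hS : S = Iio S.ncard := by
    refine IsLowerSet.eq_Iio_ncard (fun a b hba ha => lt_of_lt_of_le ha
      ((strictAnti_beta hl).antitone hba)) ((finite_Iio (l 0 - x).toNat).subset fun i hi => ?_)
    have : l i ≤ l 0 := hl.1 (Nat.zero_le i)
    simp only [S, mem_ofPred_eq] at hi
    rw [mem_Iio]
    omega
  set A := S.ncard
  have hmem : ∀ i, i ∈ S ↔ i < A := fun i => by
    rw [hS]
    exact mem_Iio
  have hA : (l A : ℤ) - 1 - A < x :=
    lt_of_le_of_ne (not_lt.1 fun h => lt_irrefl A ((hmem A).1 h)) fun h => hx ⟨A, h⟩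
  have hrows : {i | (x + A).toNat < l i} = Iio A := by
    ext i
    rw [mem_Iio]
    constructor
    · intro h
      have h : (x + A).toNat < l i := h
      by_contra! hAi
      have := hl.1 hAi
      omega
    · intro hi
      have hA1 := (hmem (A - 1)).2 (by omega)
      have := hl.1 (show i ≤ A - 1 by omega)
      simp only [S, mem_ofPred_eq] at hA1
      show (x + A).toNat < l i
      omega
  have hconj : conj l (x + A).toNat = A := by rw [conj, hrows, ncard_Iio_nat]
  exact ⟨(x + A).toNat, by omega⟩

lemma compl_betaSet (hl : IsPartition l) :
    (betaSet l)ᶜ = range fun j : ℕ => (j : ℤ) - conj l j := by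
  ext x
  refine ⟨exists_sub_conj_eq hl, ?_⟩
  rintro ⟨j, rfl⟩
  exact sub_conj_notMem_betaSet hl j

lemma betaSet_conj (hl : IsPartition l) : betaSet (conj l) = {x | -1 - x ∉ betaSet l} := by
  ext x
  show x ∈ betaSet (conj l) ↔ -1 - x ∈ (betaSet l)ᶜ
  rw [compl_betaSet hl]
  simp only [betaSet, mem_range]
  constructor <;> rintro ⟨j, hj⟩ <;> exact ⟨j, by omega⟩

lemma image_boxToHookPair (hl : IsPartition l) :
    boxToHookPair l '' {p | p.2 < l p.1} = hookPairs (betaSet l) := by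
  ext ⟨b, c⟩
  constructor
  · rintro ⟨⟨i, j⟩, hij, heq⟩
    simp only [boxToHookPair, Prod.mk.injEq] at heq
    obtain ⟨rfl, rfl⟩ := heq
    have hij : j < l i := hij
    have := (lt_conj_iff hl).2 hij
    refine ⟨⟨i, rfl⟩, sub_conj_notMem_betaSet hl j, ?_⟩
    omega
  · rintro ⟨⟨i, rfl⟩, hc, hcb⟩
    obtain ⟨j, rfl⟩ := exists_sub_conj_eq hl hc
    refine ⟨(i, j), ?_, rfl⟩
    by_contra h
    have h : l i ≤ j := not_lt.1 h
    have := mt (lt_conj_iff hl).1 (not_lt.2 h)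
    simp only at hcb
    omega

lemma injective_boxToHookPair (hl : IsPartition l) : (boxToHookPair l).Injective :=
  (strictAnti_beta hl).injective.prodMap (strictMono_sub_conj hl).injective

lemma hookLen_eq (hl : IsPartition l) {i j : ℕ} (h : j < l i) :
    (hookLen l i j : ℤ) = ((l i : ℤ) - 1 - i) - ((j : ℤ) - conj l j) := by
  have := (lt_conj_iff hl).2 h
  rw [hookLen]
  omega

lemma ncard_boxes_hookLen (hl : IsPartition l) (P : ℤ → Prop) :
    {p : ℕ × ℕ | p.2 < l p.1 ∧ P (hookLen l p.1 p.2)}.ncard =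
      {q ∈ hookPairs (betaSet l) | P (q.1 - q.2)}.ncard := by
  rw [← (injective_boxToHookPair hl).injOn.ncard_image]
  congr 1
  ext q
  constructor
  · rintro ⟨p, ⟨hp, hP⟩, rfl⟩
    exact ⟨image_boxToHookPair hl ▸ mem_image_of_mem _ hp, hookLen_eq hl hp ▸ hP⟩
  · rintro ⟨hq, hP⟩
    rw [← image_boxToHookPair hl] at hq
    obtain ⟨p, hp, rfl⟩ := hq
    exact ⟨p, ⟨hp, by rwa [hookLen_eq hl hp]⟩, rfl⟩

lemma psize_eq_ncard_hookPairs (hl : IsPartition l) : psize l = (hookPairs (betaSet l)).ncard := by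
  rw [psize, ← image_boxToHookPair hl, (injective_boxToHookPair hl).injOn.ncard_image]

lemma dp_eq_ncard_odd_sub_ncard_even (hl : IsPartition l) :
    dp l = ({q ∈ hookPairs (betaSet l) | Odd (q.1 - q.2)}.ncard : ℤ) -
      {q ∈ hookPairs (betaSet l) | Even (q.1 - q.2)}.ncard := by
  rw [dp, ← ncard_boxes_hookLen hl Odd, ← ncard_boxes_hookLen hl Even]
  simp only [Int.odd_coe_nat, Int.even_coe_nat]

lemma isCore_iff (hl : IsPartition l) (t : ℕ) :
    IsCore l t ↔ ∀ x ∈ betaSet l, x - t ∈ betaSet l := by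
  constructor
  · intro hcore x hx
    by_contra hxt
    rcases Nat.eq_zero_or_pos t with rfl | ht
    · exact hxt (by simpa using hx)
    have hq : (x, x - t) ∈ hookPairs (betaSet l) := ⟨hx, hxt, by simpa using ht⟩
    rw [← image_boxToHookPair hl] at hq
    obtain ⟨⟨i, j⟩, hij, heq⟩ := hq
    have hij : j < l i := hij
    simp only [boxToHookPair, Prod.mk.injEq] at heq
    have hhook := hookLen_eq hl hij
    rw [heq.1, heq.2] at hhook
    exact hcore i j hij ⟨1, by omega⟩
  · rintro hclosed i j hij ⟨q, hq⟩
    have hiter : ∀ r : ℕ, (l i : ℤ) - 1 - i - t * r ∈ betaSet l := by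
      intro r
      induction r with
      | zero => simpa using ⟨i, rfl⟩
      | succ r ih =>
        convert hclosed _ ih using 1
        push_cast
        ring
    have hhook := hookLen_eq hl hij
    rw [hq] at hhook
    push_cast at hhook
    exact sub_conj_notMem_betaSet hl j (by convert hiter q using 1; linarith)

lemma toPartition_betaSet (hl : IsPartition l) : toPartition (betaSet l) = l := by
  funext i
  have hrank : (betaSet l ∩ Ioi ((l i : ℤ) - 1 - i)).ncard = i := by
    have himage : betaSet l ∩ Ioi ((l i : ℤ) - 1 - i) =
        (fun i : ℕ => (l i : ℤ) - 1 - i) '' Iio i := by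
      ext x
      simp only [betaSet, mem_inter_iff, mem_range, mem_Ioi, mem_image, mem_Iio]
      constructor
      · rintro ⟨⟨i', rfl⟩, h⟩
        exact ⟨i', (strictAnti_beta hl).lt_iff_gt.1 h, rfl⟩
      · rintro ⟨i', h, rfl⟩
        exact ⟨⟨i', rfl⟩, (strictAnti_beta hl).lt_iff_gt.2 h⟩
    rw [himage, (strictAnti_beta hl).injective.injOn.ncard_image, ncard_Iio_nat]
  have := (isDiagram_betaSet hl).toPartition_ncard_inter_Ioi (x := (l i : ℤ) - 1 - i) ⟨i, rfl⟩
  rw [hrank, charge_betaSet hl] at this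
  omega

lemma eq_of_betaSet_eq {l' : ℕ → ℕ} (hl : IsPartition l) (hl' : IsPartition l')
    (h : betaSet l = betaSet l') : l = l' := by
  rw [← toPartition_betaSet hl, h, toPartition_betaSet hl']

lemma selfConj_iff (hl : IsPartition l) : SelfConj l ↔ IsSelfDual (betaSet l) := by
  constructor
  · intro hsc x
    have := Set.ext_iff.1 (betaSet_conj hl) x
    rwa [hsc] at this
  · intro hsd
    refine eq_of_betaSet_eq (isPartition_conj hl) hl ?_
    rw [betaSet_conj hl]
    ext x
    exact (hsd x).symm

end BetaSet

lemma IsDiagram.betaSet_toPartition (hX : IsDiagram X) :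
    betaSet (toPartition X) = shift X (-charge X) := by
  ext z
  simp only [betaSet, mem_range, mem_shift, sub_neg_eq_add]
  constructor
  · rintro ⟨i, rfl⟩
    obtain ⟨x, hx, rfl⟩ := hX.exists_ncard_inter_Ioi_eq i
    have := hX.toPartition_ncard_inter_Ioi hx
    convert hx using 1
    linarith
  · intro hz
    refine ⟨(X ∩ Ioi (z + charge X)).ncard, ?_⟩
    have := hX.toPartition_ncard_inter_Ioi hz
    linarith

lemma IsDiagram.toPartition_shift (hX : IsDiagram X) (d : ℤ) :
    toPartition (shift X d) = toPartition X := by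
  have hXd := isDiagram_shift hX d
  refine eq_of_betaSet_eq hXd.isPartition_toPartition hX.isPartition_toPartition ?_
  rw [hXd.betaSet_toPartition, hX.betaSet_toPartition, hX.charge_shift,
    shift_shift]
  congr 1
  ring

lemma IsDiagram.psize_toPartition (hX : IsDiagram X) :
    psize (toPartition X) = (hookPairs X).ncard := by
  rw [psize_eq_ncard_hookPairs hX.isPartition_toPartition, hX.betaSet_toPartition,
    ncard_hookPairs_shift]

lemma IsDiagram.isCore_toPartition_iff (hX : IsDiagram X) (t : ℕ) :
    IsCore (toPartition X) t ↔ ∀ x ∈ X, x - t ∈ X := by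
  rw [isCore_iff hX.isPartition_toPartition, hX.betaSet_toPartition, sub_mem_shift_iff]

/-! ### Self-dual diagrams -/

def half (X : Set ℤ) : Set ℤ := {y | 2 * y ∈ X}

def double (Y : Set ℤ) : Set ℤ := (2 * ·) '' Y ∪ (fun w => -1 - 2 * w) '' Yᶜ

@[simp] lemma two_mul_mem_double {y : ℤ} : 2 * y ∈ double Y ↔ y ∈ Y := by
  simp only [double, mem_union, mem_image, mem_compl_iff]
  constructor
  · rintro (⟨y', hy', h⟩ | ⟨w, _, h⟩)
    · rwa [show y = y' by omega]
    · omega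
  · exact fun hy => Or.inl ⟨y, hy, rfl⟩

@[simp] lemma neg_one_sub_two_mul_mem_double {w : ℤ} : -1 - 2 * w ∈ double Y ↔ w ∉ Y := by
  simp only [double, mem_union, mem_image, mem_compl_iff]
  constructor
  · rintro (⟨y, _, h⟩ | ⟨w', hw', h⟩)
    · omega
    · rwa [show w = w' by omega]
  · exact fun hw => Or.inr ⟨w, hw, rfl⟩

lemma exists_eq_two_mul_or_eq_neg_one_sub_two_mul (z : ℤ) :
    ∃ y, z = 2 * y ∨ z = -1 - 2 * y := by
  obtain ⟨k, rfl | rfl⟩ := Int.even_or_odd' z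
  · exact ⟨k, Or.inl rfl⟩
  · exact ⟨-1 - k, Or.inr (by ring)⟩

lemma isSelfDual_double (Y : Set ℤ) : IsSelfDual (double Y) := by
  intro x
  obtain ⟨y, rfl | rfl⟩ := exists_eq_two_mul_or_eq_neg_one_sub_two_mul x
  · rw [two_mul_mem_double, neg_one_sub_two_mul_mem_double, not_not]
  · rw [neg_one_sub_two_mul_mem_double, show -1 - (-1 - 2 * y) = 2 * y by ring,
      two_mul_mem_double]

lemma half_double (Y : Set ℤ) : half (double Y) = Y := by
  ext y
  exact two_mul_mem_double

lemma IsSelfDual.double_half (h : IsSelfDual X) : double (half X) = X := by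
  ext x
  obtain ⟨y, rfl | rfl⟩ := exists_eq_two_mul_or_eq_neg_one_sub_two_mul x
  · exact two_mul_mem_double
  · rw [neg_one_sub_two_mul_mem_double, h (-1 - 2 * y), show -1 - (-1 - 2 * y) = 2 * y by ring]
    rfl

lemma isDiagram_half (hX : IsDiagram X) : IsDiagram (half X) := by
  obtain ⟨⟨N, hN⟩, M, hM⟩ := hX
  exact ⟨⟨N / 2, fun y hy => hN (by rw [mem_Iio] at hy ⊢; omega)⟩,
    ⟨M / 2, fun y hy => by have := hM hy; omega⟩⟩

lemma isDiagram_double (hY : IsDiagram Y) : IsDiagram (double Y) := by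
  obtain ⟨⟨N, hN⟩, M, hM⟩ := hY
  refine ⟨⟨min (2 * N) (-2 * M - 2), fun x hx => ?_⟩, max (2 * M) (-1 - 2 * N),
    fun x hx => ?_⟩
  all_goals obtain ⟨y, rfl | rfl⟩ := exists_eq_two_mul_or_eq_neg_one_sub_two_mul x
  · exact two_mul_mem_double.2 (hN (by rw [mem_Iio, lt_min_iff] at hx; rw [mem_Iio]; omega))
  · refine neg_one_sub_two_mul_mem_double.2 fun hy => ?_
    have := hM hy
    rw [mem_Iio, lt_min_iff] at hx
    omega
  · have := hM (two_mul_mem_double.1 hx)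
    exact le_max_of_le_left (by omega)
  · have : N ≤ y := not_lt.1 fun h => neg_one_sub_two_mul_mem_double.1 hx (hN h)
    exact le_max_of_le_right (by omega)

lemma IsSelfDual.charge_eq_zero (h : IsSelfDual X) : charge X = 0 := by
  have hpre : (fun z => -1 - z) ⁻¹' (X ∩ Ici 0) = Xᶜ ∩ Iio 0 := by
    ext z
    simp only [mem_preimage, mem_inter_iff, mem_Ici, mem_compl_iff, mem_Iio]
    rw [h (-1 - z), show -1 - (-1 - z) = z by ring]
    constructor <;> rintro ⟨h1, h2⟩ <;> exact ⟨h1, by omega⟩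
  rw [charge, ← hpre, ncard_preimage_of_bijective (f := fun z : ℤ => -1 - z)
    (Equiv.subLeft (-1 : ℤ)).bijective, sub_self]

lemma sub_two_mul_mem_double_iff {t : ℤ} :
    (∀ x ∈ double Y, x - 2 * t ∈ double Y) ↔ ∀ y ∈ Y, y - t ∈ Y := by
  constructor
  · intro h y hy
    have := h (2 * y) (two_mul_mem_double.2 hy)
    rwa [show 2 * y - 2 * t = 2 * (y - t) by ring, two_mul_mem_double] at this
  · intro h x hx
    obtain ⟨y, rfl | rfl⟩ := exists_eq_two_mul_or_eq_neg_one_sub_two_mul x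
    · rw [show 2 * y - 2 * t = 2 * (y - t) by ring, two_mul_mem_double]
      exact h y (two_mul_mem_double.1 hx)
    · rw [show -1 - 2 * y - 2 * t = -1 - 2 * (y + t) by ring, neg_one_sub_two_mul_mem_double]
      exact fun hyt => neg_one_sub_two_mul_mem_double.1 hx (by simpa using h _ hyt)

def sumPairs (T : Set ℤ) (p : ℤ → Prop) : Set (ℤ × ℤ) :=
  {q | q.1 ∈ T ∧ q.2 ∈ T ∧ p (q.1 + q.2)}

lemma ncard_hookPairs_double_even (hY : IsDiagram Y) :
    {q ∈ hookPairs (double Y) | Even (q.1 - q.2)}.ncard = 2 * (hookPairs Y).ncard := by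
  set E := {q ∈ hookPairs (double Y) | Even (q.1 - q.2)}
  have hsplit := ncard_inter_add_ncard_sdiff_eq_ncard E {q | Even q.1}
    ((isDiagram_double hY).finite_hookPairs.subset (sep_subset _ _))
  have heven : (E ∩ {q | Even q.1}).ncard = (hookPairs Y).ncard := by
    rw [← ncard_preimage_of_injective_subset_range (f := fun q : ℤ × ℤ => (2 * q.1, 2 * q.2))
      (fun a b h => by simp only [Prod.mk.injEq] at h; ext <;> omega)]
    · congr 1
      ext ⟨u, v⟩
      simp [E, hookPairs, Int.even_sub]
    · rintro ⟨b, c⟩ ⟨⟨_, hbc⟩, ⟨a, rfl⟩⟩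
      obtain ⟨a', rfl⟩ := (Int.even_sub.1 hbc).1 ⟨a, rfl⟩
      exact ⟨(a, a'), by simp [two_mul]⟩
  have hodd : (E \ {q | Even q.1}).ncard = (hookPairs Y).ncard := by
    rw [← ncard_preimage_of_injective_subset_range
      (f := fun q : ℤ × ℤ => (-1 - 2 * q.2, -1 - 2 * q.1))
      (fun a b h => by simp only [Prod.mk.injEq] at h; ext <;> omega)]
    · congr 1
      ext ⟨u, v⟩
      simp [E, hookPairs, Int.even_sub, parity_simps]
      tauto
    · rintro ⟨b, c⟩ ⟨⟨_, hbc⟩, hb⟩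
      obtain ⟨a, rfl⟩ := Int.not_even_iff_odd.1 hb
      obtain ⟨a', rfl⟩ := Int.not_even_iff_odd.1 fun hc => hb ((Int.even_sub.1 hbc).2 hc)
      exact ⟨(-1 - a', -1 - a), by ext <;> simp <;> ring⟩
  omega

lemma ncard_hookPairs_double_odd (hY : IsDiagram Y) :
    {q ∈ hookPairs (double Y) | Odd (q.1 - q.2)}.ncard =
      (sumPairs Y (0 ≤ ·)).ncard + (sumPairs Yᶜ (· < 0)).ncard := by
  set O := {q ∈ hookPairs (double Y) | Odd (q.1 - q.2)}
  have hsplit := ncard_inter_add_ncard_sdiff_eq_ncard O {q | Even q.1}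
    ((isDiagram_double hY).finite_hookPairs.subset (sep_subset _ _))
  have heven : (O ∩ {q | Even q.1}).ncard = (sumPairs Y (0 ≤ ·)).ncard := by
    rw [← ncard_preimage_of_injective_subset_range
      (f := fun q : ℤ × ℤ => (2 * q.1, -1 - 2 * q.2))
      (fun a b h => by simp only [Prod.mk.injEq] at h; ext <;> omega)]
    · congr 1
      ext ⟨u, v⟩
      simp [O, hookPairs, sumPairs, Int.odd_sub, parity_simps]
      omega
    · rintro ⟨b, c⟩ ⟨⟨_, hbc⟩, ⟨a, rfl⟩⟩
      obtain ⟨a', rfl⟩ : Odd c := by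
        rw [← Int.not_even_iff_odd]
        exact fun hc => (Int.odd_sub.1 hbc).2 hc |> Int.not_even_iff_odd.2 <| ⟨a, rfl⟩
      exact ⟨(a, -1 - a'), by ext <;> simp <;> ring⟩
  have hodd : (O \ {q | Even q.1}).ncard = (sumPairs Yᶜ (· < 0)).ncard := by
    rw [← ncard_preimage_of_injective_subset_range
      (f := fun q : ℤ × ℤ => (-1 - 2 * q.1, 2 * q.2))
      (fun a b h => by simp only [Prod.mk.injEq] at h; ext <;> omega)]
    · congr 1
      ext ⟨u, v⟩
      simp [O, hookPairs, sumPairs, Int.odd_sub, parity_simps]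
      omega
    · rintro ⟨b, c⟩ ⟨⟨_, hbc⟩, hb⟩
      obtain ⟨a, rfl⟩ := Int.not_even_iff_odd.1 hb
      obtain ⟨a', rfl⟩ : Even c := by
        by_contra hc
        exact (Int.odd_sub.1 hbc).1 ⟨a, rfl⟩ |> fun h => hc h
      exact ⟨(-1 - a, a'), by ext <;> simp <;> ring⟩
  omega

/-! ### Counting odd hooks -/

noncomputable def oddHookCount (Y : Set ℤ) : ℤ :=
  (sumPairs Y (0 ≤ ·)).ncard + (sumPairs Yᶜ (· < 0)).ncard

lemma IsDiagram.finite_sumPairs_nonneg (hY : IsDiagram Y) : (sumPairs Y (0 ≤ ·)).Finite := by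
  obtain ⟨M, hM⟩ := hY.2
  refine ((finite_Icc (-M) M).prod (finite_Icc (-M) M)).subset fun q ⟨hu, hv, huv⟩ => ?_
  have := hM hu
  have := hM hv
  exact ⟨⟨by omega, by omega⟩, by omega, by omega⟩

lemma IsDiagram.finite_sumPairs_compl_neg (hY : IsDiagram Y) :
    (sumPairs Yᶜ (· < 0)).Finite := by
  obtain ⟨N, hN⟩ := hY.1
  refine ((finite_Icc N (-N)).prod (finite_Icc N (-N))).subset fun q ⟨hu, hv, huv⟩ => ?_
  have h1 : N ≤ q.1 := not_lt.1 fun h => hu (hN h)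
  have h2 : N ≤ q.2 := not_lt.1 fun h => hv (hN h)
  exact ⟨⟨by omega, by simp only at huv; omega⟩, by omega, by simp only at huv; omega⟩

open Classical in
lemma ncard_sumPairs_insert {T : Set ℤ} {x : ℤ} (p : ℤ → Prop) (hx : x ∉ T)
    (hfin : (sumPairs (insert x T) p).Finite) :
    (sumPairs (insert x T) p).ncard =
      (sumPairs T p).ncard + 2 * (T ∩ {v | p (x + v)}).ncard + if p (x + x) then 1 else 0 := by
  set P := sumPairs (insert x T) p
  have hsplit₁ := ncard_inter_add_ncard_sdiff_eq_ncard P {q | q.1 = x} hfin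
  have hsplit₂ := ncard_inter_add_ncard_sdiff_eq_ncard (P \ {q | q.1 = x}) {q | q.2 = x}
    (hfin.subset sdiff_subset)
  have hrow : (P ∩ {q | q.1 = x}).ncard = (insert x T ∩ {v | p (x + v)}).ncard := by
    rw [← ncard_preimage_of_injective_subset_range (Prod.mk_right_injective x)]
    · congr 1
      ext v
      simp [P, sumPairs]
    · rintro ⟨a, b⟩ ⟨_, rfl : a = x⟩
      exact ⟨b, rfl⟩
  have hcol : ((P \ {q | q.1 = x}) ∩ {q | q.2 = x}).ncard = (T ∩ {v | p (x + v)}).ncard := by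
    rw [← ncard_preimage_of_injective_subset_range (Prod.mk_left_injective x)]
    · congr 1
      ext u
      simp only [P, sumPairs, mem_preimage, mem_inter_iff, mem_sdiff, mem_insert_iff,
        mem_ofPred_eq, true_or, and_true, add_comm u]
      constructor
      · rintro ⟨⟨hu | hu, _, h⟩, hux⟩
        · exact absurd hu hux
        · exact ⟨hu, h⟩
      · rintro ⟨hu, h⟩
        exact ⟨⟨Or.inr hu, trivial, h⟩, fun hux => hx (hux ▸ hu)⟩
    · rintro ⟨a, b⟩ ⟨_, rfl : b = x⟩
      exact ⟨a, rfl⟩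
  have hrest : (P \ {q | q.1 = x}) \ {q | q.2 = x} = sumPairs T p := by
    ext ⟨u, v⟩
    simp only [P, sumPairs, mem_sdiff, mem_insert_iff, mem_ofPred_eq]
    constructor
    · rintro ⟨⟨⟨hu | hu, hv | hv, h⟩, hux⟩, hvx⟩ <;> simp_all
    · rintro ⟨hu, hv, h⟩
      exact ⟨⟨⟨Or.inr hu, Or.inr hv, h⟩, fun hux => hx (hux ▸ hu)⟩,
        fun hvx => hx (hvx ▸ hv)⟩
  have hdiag := ncard_insert_inter (S := {v | p (x + v)}) hx
    ((hfin.preimage (Prod.mk_right_injective x).injOn).subset fun v hv =>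
      ⟨Or.inl rfl, Or.inr hv.1, hv.2⟩)
  simp only [mem_ofPred_eq] at hdiag
  rw [hrest] at hsplit₂
  omega

lemma isDiagram_Iio (e : ℤ) : IsDiagram (Iio e) := ⟨⟨e, subset_rfl⟩, bddAbove_Iio⟩

lemma charge_Iio (e : ℤ) : charge (Iio e) = e := by
  rw [(isDiagram_Iio e).charge_eq_of_Iio_subset subset_rfl, Iio_inter_Ici, Ico_self, ncard_empty]
  simp

lemma oddHookCount_Iio_add_one (e : ℤ) :
    oddHookCount (Iio (e + 1)) = oddHookCount (Iio e) + 4 * e + 1 := by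
  classical
  have h₁ : Iio (e + 1) = insert e (Iio e) := by rw [Iio_add_one_eq_Iic, Iio_insert]
  have h₂ : (Iio e)ᶜ = insert e (Iio (e + 1))ᶜ := by
    rw [compl_Iio, compl_Iio, Ici_add_one_eq_Ioi, Ioi_insert]
  have hP := ncard_sumPairs_insert (T := Iio e) (0 ≤ ·) (lt_irrefl e)
    (h₁ ▸ (isDiagram_Iio (e + 1)).finite_sumPairs_nonneg)
  have hN := ncard_sumPairs_insert (T := (Iio (e + 1))ᶜ) (· < 0) (by simp)
    (h₂ ▸ (isDiagram_Iio e).finite_sumPairs_compl_neg)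
  have s₁ : Iio e ∩ {v | 0 ≤ e + v} = Ico (-e) e := by
    ext v
    simp only [mem_inter_iff, mem_Iio, mem_ofPred_eq, mem_Ico]
    omega
  have s₂ : (Iio (e + 1))ᶜ ∩ {v | e + v < 0} = Ico (e + 1) (-e) := by
    ext v
    simp only [mem_inter_iff, mem_compl_iff, mem_Iio, mem_ofPred_eq, mem_Ico]
    omega
  rw [← h₁, s₁, Int.ncard_Ico] at hP
  rw [← h₂, s₂, Int.ncard_Ico] at hN
  simp only [oddHookCount]
  split_ifs at hP hN <;> omega

lemma oddHookCount_Iio (e : ℤ) : oddHookCount (Iio e) = e * (2 * e - 1) := by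
  induction e using Int.induction_on with
  | zero =>
    have h₁ : sumPairs (Iio 0) (0 ≤ ·) = ∅ := by
      ext q
      simp only [sumPairs, mem_Iio, mem_ofPred_eq, mem_empty_iff_false, iff_false]
      omega
    have h₂ : sumPairs (Iio 0)ᶜ (· < 0) = ∅ := by
      ext q
      simp only [sumPairs, compl_Iio, mem_Ici, mem_ofPred_eq, mem_empty_iff_false, iff_false]
      omega
    rw [oddHookCount, h₁, h₂, ncard_empty]
    rfl
  | succ i ih =>
    rw [oddHookCount_Iio_add_one, ih]
    ring
  | pred i ih =>
    have := oddHookCount_Iio_add_one (-(i : ℤ) - 1)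
    rw [sub_add_cancel, ih] at this
    linarith

lemma IsDiagram.eq_Iio_charge (hY : IsDiagram Y) (h : hookPairs Y = ∅) : Y = Iio (charge Y) := by
  rw [eq_empty_iff_forall_notMem] at h
  have hmax := Int.csSup_mem hY.nonempty hY.2
  have hY' : Y = Iio (sSup Y + 1) := by
    ext z
    rw [mem_Iio, Int.lt_add_one_iff]
    refine ⟨fun hz => le_csSup hY.2 hz, fun hz => ?_⟩
    rcases hz.lt_or_eq with hz | rfl
    · by_contra hzY
      exact h (sSup Y, z) ⟨hmax, hzY, hz⟩
    · exact hmax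
  conv_rhs => rw [hY', charge_Iio]
  exact hY'

lemma exists_mem_sub_one_notMem {b c : ℤ} (h : (b, c) ∈ hookPairs Y) :
    ∃ x ∈ Y, x - 1 ∉ Y := by
  obtain ⟨hb, hc, hcb⟩ := h
  by_contra! hdown
  have hsub : ∀ k : ℕ, b - k ∈ Y := fun k => by
    induction k with
    | zero => simpa using hb
    | succ k ih => simpa [sub_sub] using hdown _ ih
  have := hsub (b - c).toNat
  rw [Int.toNat_of_nonneg (by simp only at hcb; omega), sub_sub_cancel] at this
  exact hc this

lemma IsDiagram.preimage_swap (hY : IsDiagram Y) (a b : ℤ) :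
    IsDiagram (Equiv.swap a b ⁻¹' Y) := by
  obtain ⟨⟨N, hN⟩, M, hM⟩ := hY
  refine ⟨⟨min N (min a b), fun z hz => ?_⟩, max M (max a b), fun z hz => ?_⟩
  · rw [mem_Iio, lt_min_iff, lt_min_iff] at hz
    rw [mem_preimage, Equiv.swap_apply_of_ne_of_ne (by omega) (by omega)]
    exact hN hz.1
  · by_cases hab : z = a ∨ z = b
    · exact le_max_of_le_right (by omega)
    · push Not at hab
      have := hM (by rwa [mem_preimage, Equiv.swap_apply_of_ne_of_ne hab.1 hab.2] at hz)
      exact le_max_of_le_left this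

lemma IsDiagram.charge_preimage_swap (hY : IsDiagram Y) (a b : ℤ) :
    charge (Equiv.swap a b ⁻¹' Y) = charge Y := by
  obtain ⟨N, hN⟩ := hY.1
  set N' := min N (min a b)
  have hIci : Equiv.swap a b ⁻¹' Ici N' = Ici N' := by
    ext z
    simp only [mem_preimage, mem_Ici, Equiv.swap_apply_def]
    split_ifs <;> omega
  have hN' : Iio N' ⊆ Y := (Iio_subset_Iio (min_le_left _ _)).trans hN
  have hN'' : Iio N' ⊆ Equiv.swap a b ⁻¹' Y := fun z hz => by
    rw [mem_Iio, lt_min_iff, lt_min_iff] at hz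
    rw [mem_preimage, Equiv.swap_apply_of_ne_of_ne (by omega) (by omega)]
    exact hN hz.1
  have hinter : Equiv.swap a b ⁻¹' Y ∩ Ici N' = Equiv.swap a b ⁻¹' (Y ∩ Ici N') := by
    rw [preimage_inter, hIci]
  rw [(hY.preimage_swap a b).charge_eq_of_Iio_subset hN'', hY.charge_eq_of_Iio_subset hN',
    hinter, ncard_preimage_of_bijective (Equiv.bijective _)]

lemma IsDiagram.ncard_hookPairs_preimage_swap (hY : IsDiagram Y) {x : ℤ} (hx : x ∈ Y)
    (hx' : x - 1 ∉ Y) :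
    (hookPairs Y).ncard = (hookPairs (Equiv.swap x (x - 1) ⁻¹' Y)).ncard + 1 := by
  set σ := Equiv.swap x (x - 1)
  -- the transposition preserves the order of all pairs except `(x - 1, x)`
  have horder : ∀ {b c : ℤ}, b ≠ x → c ≠ x - 1 →
      (c < b ↔ σ c < σ b ∧ ¬(σ b = x ∧ σ c = x - 1)) := fun {b c} hb hc => by
    simp only [σ, Equiv.swap_apply_def]
    split_ifs <;> omega
  have h : hookPairs (σ ⁻¹' Y) = Prod.map σ σ ⁻¹' (hookPairs Y \ {(x, x - 1)}) := by
    ext ⟨b, c⟩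
    simp only [hookPairs, mem_preimage, mem_sdiff, mem_ofPred_eq, mem_singleton_iff,
      Prod.map_apply, Prod.mk.injEq]
    have hb : σ b ∈ Y → b ≠ x := fun h hbx => hx' (by simpa [σ, hbx] using h)
    have hc : σ c ∉ Y → c ≠ x - 1 := fun h hcx => h (by simpa [σ, hcx] using hx)
    constructor
    · rintro ⟨hbY, hcY, hcb⟩
      exact ⟨⟨hbY, hcY, ((horder (hb hbY) (hc hcY)).1 hcb).1⟩,
        ((horder (hb hbY) (hc hcY)).1 hcb).2⟩
    · rintro ⟨⟨hbY, hcY, hcb⟩, hne⟩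
      exact ⟨hbY, hcY, (horder (hb hbY) (hc hcY)).2 ⟨hcb, hne⟩⟩
  rw [h, ncard_preimage_of_bijective (σ.bijective.prodMap σ.bijective)]
  exact (ncard_sdiff_singleton_add_one (show (x, x - 1) ∈ hookPairs Y from
    ⟨hx, hx', sub_one_lt x⟩) hY.finite_hookPairs).symm

lemma preimage_swap_eq_insert {T : Set ℤ} {a b : ℤ} (ha : a ∈ T) (hb : b ∉ T) :
    Equiv.swap a b ⁻¹' T = insert b (T \ {a}) := by
  have hab : a ≠ b := ne_of_mem_of_not_mem ha hb
  ext z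
  rcases eq_or_ne z a with rfl | hza
  · simp [hb, hab]
  rcases eq_or_ne z b with rfl | hzb
  · simp [ha]
  · simp [Equiv.swap_apply_of_ne_of_ne hza hzb, hza, hzb]

open Classical in
lemma ncard_sumPairs_nonneg_insert_sub_one {T : Set ℤ} {x : ℤ} (hx : x ∉ T) (hx' : x - 1 ∉ T)
    (hfin : (sumPairs (insert x T) (0 ≤ ·)).Finite)
    (hfin' : (sumPairs (insert (x - 1) T) (0 ≤ ·)).Finite) :
    (sumPairs (insert x T) (0 ≤ ·)).ncard = (sumPairs (insert (x - 1) T) (0 ≤ ·)).ncard +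
      2 * (if -x ∈ T then 1 else 0) + if x = 0 then 1 else 0 := by
  have e₁ : {v : ℤ | 0 ≤ x + v} = Ici (-x) := by
    ext
    simp only [mem_ofPred_eq, mem_Ici]
    omega
  have e₂ : {v : ℤ | 0 ≤ x - 1 + v} = Ioi (-x) := by
    ext
    simp only [mem_ofPred_eq, mem_Ioi]
    omega
  have hfinT : (T ∩ Ioi (-x)).Finite :=
    (hfin'.preimage (Prod.mk_right_injective _).injOn).subset fun v hv =>
      ⟨Or.inl rfl, Or.inr hv.1, by have := mem_Ioi.1 hv.2; show 0 ≤ x - 1 + v; omega⟩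
  have h₁ := ncard_sumPairs_insert (0 ≤ ·) hx hfin
  have h₂ := ncard_sumPairs_insert (0 ≤ ·) hx' hfin'
  rw [e₁, ncard_inter_Ici_eq T (-x) hfinT] at h₁
  rw [e₂] at h₂
  rw [h₁, h₂]
  split_ifs <;> omega

open Classical in
lemma ncard_sumPairs_neg_insert_sub_one {C : Set ℤ} {x : ℤ} (hx : x ∉ C) (hx' : x - 1 ∉ C)
    (hfin : (sumPairs (insert (x - 1) C) (· < 0)).Finite)
    (hfin' : (sumPairs (insert x C) (· < 0)).Finite) :
    (sumPairs (insert (x - 1) C) (· < 0)).ncard = (sumPairs (insert x C) (· < 0)).ncard +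
      2 * (if -x ∈ C then 1 else 0) + if x = 0 then 1 else 0 := by
  have e₁ : {v : ℤ | x - 1 + v < 0} = Iic (-x) := by
    ext
    simp only [mem_ofPred_eq, mem_Iic]
    omega
  have e₂ : {v : ℤ | x + v < 0} = Iio (-x) := by
    ext
    simp only [mem_ofPred_eq, mem_Iio]
    omega
  have hfinC : (C ∩ Iio (-x)).Finite :=
    (hfin'.preimage (Prod.mk_right_injective _).injOn).subset fun v hv =>
      ⟨Or.inl rfl, Or.inr hv.1, by have := mem_Iio.1 hv.2; show x + v < 0; omega⟩
  have h₁ := ncard_sumPairs_insert (· < 0) hx' hfin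
  have h₂ := ncard_sumPairs_insert (· < 0) hx hfin'
  rw [e₁, ncard_inter_Iic_eq C (-x) hfinC] at h₁
  rw [e₂] at h₂
  rw [h₁, h₂]
  split_ifs <;> omega

lemma IsDiagram.oddHookCount_preimage_swap (hY : IsDiagram Y) {x : ℤ} (hx : x ∈ Y)
    (hx' : x - 1 ∉ Y) : oddHookCount Y = oddHookCount (Equiv.swap x (x - 1) ⁻¹' Y) + 2 := by
  classical
  set S := Y \ {x}
  set C := Yᶜ \ {x - 1}
  have hY₁ : Y = insert x S := by rw [insert_sdiff_singleton, insert_eq_of_mem hx]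
  have hY₂ : Yᶜ = insert (x - 1) C := by rw [insert_sdiff_singleton, insert_eq_of_mem hx']
  have hY'₁ : Equiv.swap x (x - 1) ⁻¹' Y = insert (x - 1) S := preimage_swap_eq_insert hx hx'
  have hY'₂ : (Equiv.swap x (x - 1) ⁻¹' Y)ᶜ = insert x C := by
    rw [← preimage_compl, Equiv.swap_comm]
    exact preimage_swap_eq_insert hx' (not_not.2 hx)
  have hY' := hY.preimage_swap x (x - 1)
  have hP := ncard_sumPairs_nonneg_insert_sub_one (T := S) (by simp [S]) (by simp [S, hx'])
    (hY₁ ▸ hY.finite_sumPairs_nonneg) (hY'₁ ▸ hY'.finite_sumPairs_nonneg)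
  have hN := ncard_sumPairs_neg_insert_sub_one (C := C) (by simp [C, hx]) (by simp [C])
    (hY₂ ▸ hY.finite_sumPairs_compl_neg) (hY'₂ ▸ hY'.finite_sumPairs_compl_neg)
  -- `-x` lies in exactly one of `S` and `C`, unless `x = 0`
  have hone : ((if -x ∈ S then 1 else 0) + (if -x ∈ C then 1 else 0) +
      (if x = 0 then 1 else 0) : ℕ) = 1 := by
    by_cases h0 : x = 0
    · subst h0
      simp [S, C, hx]
    · by_cases hxY : -x ∈ Y
      · simp [S, C, hxY, h0, show -x ≠ x by omega]
      · simp [S, C, hxY, h0, show -x ≠ x - 1 by omega]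
  rw [oddHookCount, oddHookCount, hY'₂, hY'₁, hY₂, hY₁, hP, hN]
  split_ifs at hone ⊢ <;> push_cast <;> omega

lemma IsDiagram.oddHookCount_eq (hY : IsDiagram Y) :
    oddHookCount Y = 2 * (hookPairs Y).ncard + charge Y * (2 * charge Y - 1) := by
  induction hn : (hookPairs Y).ncard generalizing Y with
  | zero =>
    rw [hY.eq_Iio_charge ((ncard_eq_zero hY.finite_hookPairs).1 hn), oddHookCount_Iio, charge_Iio]
    ring
  | succ n ih =>
    obtain ⟨⟨b, c⟩, hbc⟩ := nonempty_of_ncard_ne_zero (by omega : (hookPairs Y).ncard ≠ 0)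
    obtain ⟨x, hx, hx'⟩ := exists_mem_sub_one_notMem hbc
    have hcount := hY.ncard_hookPairs_preimage_swap hx hx'
    rw [hY.oddHookCount_preimage_swap hx hx', ih (hY.preimage_swap x (x - 1)) (by omega),
      hY.charge_preimage_swap]
    push_cast
    ring

/-! ### Self-conjugate partitions -/

lemma ncard_eq_ncard_even_add_ncard_odd {S : Set (ℤ × ℤ)} (hS : S.Finite) :
    S.ncard = {q ∈ S | Even (q.1 - q.2)}.ncard + {q ∈ S | Odd (q.1 - q.2)}.ncard := by
  rw [← ncard_inter_add_ncard_sdiff_eq_ncard S {q | Even (q.1 - q.2)} hS]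
  congr 2
  ext q
  simp [Int.not_even_iff_odd]

lemma IsDiagram.betaSet_toPartition_double (hY : IsDiagram Y) :
    betaSet (toPartition (double Y)) = double Y := by
  rw [(isDiagram_double hY).betaSet_toPartition, (isSelfDual_double Y).charge_eq_zero, neg_zero,
    shift_zero]

lemma IsDiagram.psize_toPartition_double (hY : IsDiagram Y) :
    (psize (toPartition (double Y)) : ℤ) =
      4 * (hookPairs Y).ncard + charge Y * (2 * charge Y - 1) := by
  have := hY.oddHookCount_eq
  rw [oddHookCount] at this
  have hX := isDiagram_double hY
  rw [hX.psize_toPartition, ncard_eq_ncard_even_add_ncard_odd hX.finite_hookPairs,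
    ncard_hookPairs_double_even hY, ncard_hookPairs_double_odd hY]
  push_cast
  linarith

lemma IsDiagram.dp_toPartition_double (hY : IsDiagram Y) :
    dp (toPartition (double Y)) = charge Y * (2 * charge Y - 1) := by
  have := hY.oddHookCount_eq
  rw [oddHookCount] at this
  rw [dp_eq_ncard_odd_sub_ncard_even (isDiagram_double hY).isPartition_toPartition,
    hY.betaSet_toPartition_double,
    ncard_hookPairs_double_odd hY, ncard_hookPairs_double_even hY]
  push_cast
  linarith

lemma IsDiagram.selfConj_toPartition_double (hY : IsDiagram Y) :
    SelfConj (toPartition (double Y)) :=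
  (selfConj_iff (isDiagram_double hY).isPartition_toPartition).2
    (by rw [hY.betaSet_toPartition_double]; exact isSelfDual_double Y)

lemma IsDiagram.isCore_toPartition_double_iff (hY : IsDiagram Y) (t : ℕ) :
    IsCore (toPartition (double Y)) (2 * t) ↔ ∀ y ∈ Y, y - t ∈ Y := by
  rw [(isDiagram_double hY).isCore_toPartition_iff, Nat.cast_mul, Nat.cast_ofNat,
    sub_two_mul_mem_double_iff]

lemma toPartition_double_half {l : ℕ → ℕ} (hl : IsPartition l) (hsc : SelfConj l) :
    toPartition (double (half (betaSet l))) = l := by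
  rw [((selfConj_iff hl).1 hsc).double_half, toPartition_betaSet hl]

lemma mul_two_mul_sub_one_injective : Function.Injective fun c : ℤ => c * (2 * c - 1) := by
  intro a b h
  have : (a - b) * (2 * a + 2 * b - 1) = 0 := by
    simp only at h
    linear_combination h
  rcases mul_eq_zero.1 this with h | h <;> omega

lemma exists_mul_two_mul_sub_one_eq (m : ℕ) :
    ∃ c : ℤ, c * (2 * c - 1) = ((m * (m + 1) / 2 : ℕ) : ℤ) := by
  obtain ⟨r, rfl | rfl⟩ := Nat.even_or_odd' m
  · refine ⟨-r, ?_⟩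
    rw [show 2 * r * (2 * r + 1) = 2 * (r * (2 * r + 1)) by ring, Nat.mul_div_cancel_left _ two_pos]
    push_cast
    ring
  · refine ⟨r + 1, ?_⟩
    rw [show (2 * r + 1) * (2 * r + 1 + 1) = 2 * ((2 * r + 1) * (r + 1)) by ring,
      Nat.mul_div_cancel_left _ two_pos]
    push_cast
    ring

/-- One component of the 2-quotient of `l`; for self-conjugate `l` the other one is its
conjugate. -/
noncomputable def selfConjQuotient (l : ℕ → ℕ) : ℕ → ℕ := toPartition (half (betaSet l))

noncomputable def ofSelfConjQuotient (c : ℤ) (u : ℕ → ℕ) : ℕ → ℕ :=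
  toPartition (double (shift (betaSet u) c))

section Bijection

variable {l : ℕ → ℕ}

lemma psize_eq_four_mul_psize_selfConjQuotient_add_dp (hl : IsPartition l) (hsc : SelfConj l) :
    (psize l : ℤ) = 4 * psize (selfConjQuotient l) + dp l := by
  have hY := isDiagram_half (isDiagram_betaSet hl)
  have hpsize := hY.psize_toPartition_double
  have hdp := hY.dp_toPartition_double
  rw [toPartition_double_half hl hsc] at hpsize hdp
  rw [selfConjQuotient, hY.psize_toPartition, hpsize, hdp]

lemma charge_half_betaSet (hl : IsPartition l) (hsc : SelfConj l) {c : ℤ}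
    (hdp : dp l = c * (2 * c - 1)) : charge (half (betaSet l)) = c := by
  have := (isDiagram_half (isDiagram_betaSet hl)).dp_toPartition_double
  rw [toPartition_double_half hl hsc, hdp] at this
  exact mul_two_mul_sub_one_injective this.symm

lemma bijOn_selfConjQuotient {ι : Type*} (t : ι → ℕ) {c : ℤ} {n k : ℕ}
    (hn : (n : ℤ) = 4 * k + c * (2 * c - 1)) :
    BijOn selfConjQuotient
      {l | IsPartition l ∧ SelfConj l ∧ psize l = n ∧ dp l = c * (2 * c - 1) ∧
        ∀ i, IsCore l (2 * t i)}
      {u | IsPartition u ∧ psize u = k ∧ ∀ i, IsCore u (t i)} := by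
  refine InvOn.bijOn (f' := ofSelfConjQuotient c) ⟨?_, ?_⟩ ?_ ?_
  · rintro l ⟨hl, hsc, -, hdp, -⟩
    have hY := isDiagram_half (isDiagram_betaSet hl)
    rw [ofSelfConjQuotient, selfConjQuotient, hY.betaSet_toPartition, shift_shift,
      charge_half_betaSet hl hsc hdp, neg_add_cancel, shift_zero, toPartition_double_half hl hsc]
  · rintro u ⟨hu, -, -⟩
    have hY := isDiagram_shift (isDiagram_betaSet hu) c
    rw [selfConjQuotient, ofSelfConjQuotient, hY.betaSet_toPartition_double, half_double,
      (isDiagram_betaSet hu).toPartition_shift, toPartition_betaSet hu]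
  · rintro l ⟨hl, hsc, hpsize, hdp, hcore⟩
    have hY := isDiagram_half (isDiagram_betaSet hl)
    refine ⟨hY.isPartition_toPartition, ?_, fun i => ?_⟩
    · have := psize_eq_four_mul_psize_selfConjQuotient_add_dp hl hsc
      rw [hpsize, hdp, hn] at this
      omega
    · rw [selfConjQuotient, hY.isCore_toPartition_iff, ← hY.isCore_toPartition_double_iff,
        toPartition_double_half hl hsc]
      exact hcore i
  · rintro u ⟨hu, hpsize, hcore⟩
    have hY := isDiagram_shift (isDiagram_betaSet hu) c
    have hcharge : charge (shift (betaSet u) c) = c := by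
      rw [(isDiagram_betaSet hu).charge_shift, charge_betaSet hu, zero_add]
    refine ⟨(isDiagram_double hY).isPartition_toPartition, hY.selfConj_toPartition_double, ?_, ?_,
      fun i => ?_⟩
    · have := hY.psize_toPartition_double
      rw [hcharge, ncard_hookPairs_shift, ← psize_eq_ncard_hookPairs hu, hpsize, ← hn] at this
      exact_mod_cast this
    · rw [ofSelfConjQuotient, hY.dp_toPartition_double, hcharge]
    · rw [ofSelfConjQuotient, hY.isCore_toPartition_double_iff, sub_mem_shift_iff,
        ← isCore_iff hu]
      exact hcore i

end Bijection

end Maya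

theorem count_selfconjugate_simultaneous_cores (m n p : ℕ) (t : Fin p → ℕ) :
    (∀ k : ℕ, n = 4 * k + m * (m + 1) / 2 →
      Set.ncard {l : ℕ → ℕ | IsPartition l ∧ SelfConj l ∧ psize l = n ∧
          dp l = ((m * (m + 1) / 2 : ℕ) : ℤ) ∧ ∀ i : Fin p, IsCore l (2 * t i)} =
        Set.ncard {l : ℕ → ℕ | IsPartition l ∧ psize l = k ∧ ∀ i : Fin p, IsCore l (t i)}) ∧
    ((¬ ∃ k : ℕ, n = 4 * k + m * (m + 1) / 2) →
      Set.ncard {l : ℕ → ℕ | IsPartition l ∧ SelfConj l ∧ psize l = n ∧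
          dp l = ((m * (m + 1) / 2 : ℕ) : ℤ) ∧ ∀ i : Fin p, IsCore l (2 * t i)} = 0) := by
  obtain ⟨c, hc⟩ := Maya.exists_mul_two_mul_sub_one_eq m
  refine ⟨fun k hk => ?_, fun hno => ?_⟩
  · rw [← hc]
    exact (Maya.bijOn_selfConjQuotient t (by rw [hc]; exact_mod_cast hk)).ncard_eq
  · convert Set.ncard_empty (ℕ → ℕ)
    refine Set.eq_empty_of_forall_notMem fun l ⟨hl, hsc, hn, hdp, _⟩ =>
      hno ⟨psize (Maya.selfConjQuotient l), ?_⟩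
    have := Maya.psize_eq_four_mul_psize_selfConjQuotient_add_dp hl hsc
    rw [hn, hdp] at this
    omega
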